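/- arXiv:1905.05620 — 7 statements merged into one kernel-verified Lean document; each statement's English description precedes it below -/
import Mathlib

section
/- For all 1 ≤ i < j ≤ n one has the identity in S_n: g_i⁻¹ · g_j = s_{n−1} ∘ s_{n−2} ∘ ⋯ ∘ s_i ∘ s_j ∘ s_{j+1} ∘ ⋯ ∘ s_{n−1} = s_{j−1} ∘ s_j ∘ ⋯ ∘ s_{n−2} ∘ s_{n−1} ∘ s_{n−2} ∘ ⋯ ∘ s_{i+1} ∘ s_i (indices ascending from j−1 to n−1, then descending from n−2 to i). -/
/-!
Each `s_j` is an involution, so inverting `g_i` reverses its word, which is the first identity.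
For the second, an ascending product `s_a ⋯ s_{a+l-1}` is the cycle `(a a+1 ⋯ a+l)` and the
descending product `s_{a+l-1} ⋯ s_a` is its inverse; with these closed forms both sides of
the identity are evaluated pointwise and agree by a case analysis in linear arithmetic.
-/

/-- The simple transposition `s_j ∈ S_n` (1-based: it swaps the points `j` and `j+1`
of `{1, …, n}`, which are represented by the elements `⟨j-1⟩` and `⟨j⟩` of `Fin n`),
defined to be the identity unless `1 ≤ j ≤ n-1`. -/
def sT (n j : ℕ) : Equiv.Perm (Fin n) :=
  if h : 1 ≤ j ∧ j < n then Equiv.swap ⟨j - 1, by omega⟩ ⟨j, h.2⟩ else 1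

/-- The coset representative `g_i = s_i ∘ s_{i+1} ∘ ⋯ ∘ s_{n-1} ∈ S_n` (1-based; the
empty product `g_n` is the identity). -/
def gElt (n i : ℕ) : Equiv.Perm (Fin n) :=
  (((List.range' i (n - i)).map (sT n)).prod)

lemma sT_inv (n j : ℕ) : (sT n j)⁻¹ = sT n j := by
  unfold sT; split_ifs <;> simp

lemma inv_prod_map_sT (n : ℕ) (l : List ℕ) :
    (l.map (sT n)).prod⁻¹ = (l.reverse.map (sT n)).prod := by
  simp only [List.prod_inv_reverse, List.map_map, Function.comp_def, sT_inv, List.map_reverse]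

lemma val_sT_apply {n j : ℕ} (h1 : 1 ≤ j) (h2 : j < n) (x : Fin n) :
    (sT n j x).val = if x.val = j - 1 then j else if x.val = j then j - 1 else x.val := by
  rw [sT, dif_pos ⟨h1, h2⟩, Equiv.swap_apply_def]
  split_ifs <;> simp only [Fin.ext_iff] at * <;> omega

lemma val_prod_map_sT_range'_apply {n i l : ℕ} (hi : 1 ≤ i) (hl : i + l ≤ n) (x : Fin n) :
    (((List.range' i l).map (sT n)).prod x).val =
      if x.val + 1 = i + l then i - 1
      else if i - 1 ≤ x.val ∧ x.val + 1 < i + l then x.val + 1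
      else x.val := by
  induction l generalizing x with
  | zero =>
    simp only [List.range'_zero, List.map_nil, List.prod_nil, Equiv.Perm.one_apply]
    split_ifs <;> omega
  | succ l ih =>
    rw [List.range'_1_concat, List.map_append, List.prod_append, List.map_singleton,
      List.prod_singleton, Equiv.Perm.mul_apply, ih (by omega),
      val_sT_apply (by omega) (by omega)]
    split_ifs <;> omega

lemma val_prod_map_sT_reverse_range'_apply {n i l : ℕ} (hi : 1 ≤ i) (hl : i + l ≤ n)
    (x : Fin n) :
    (((List.range' i l).reverse.map (sT n)).prod x).val =
      if x.val + 1 = i then i + l - 1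
      else if i ≤ x.val ∧ x.val ≤ i + l - 1 then x.val - 1
      else x.val := by
  induction l generalizing x with
  | zero =>
    simp only [List.range'_zero, List.reverse_nil, List.map_nil, List.prod_nil,
      Equiv.Perm.one_apply]
    split_ifs <;> omega
  | succ l ih =>
    rw [List.range'_1_concat, List.reverse_append, List.reverse_singleton,
      List.singleton_append, List.map_cons, List.prod_cons, Equiv.Perm.mul_apply,
      val_sT_apply (by omega) (by omega), ih (by omega)]
    split_ifs <;> omega

lemma gElt_inv_mul_gElt (n i j : ℕ) :
    (gElt n i)⁻¹ * gElt n j =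
      ((List.range' i (n - i)).reverse.map (sT n)).prod *
        ((List.range' j (n - j)).map (sT n)).prod := by
  rw [gElt, gElt, inv_prod_map_sT]

lemma prod_reverse_mul_prod_eq_prod_mul_prod_reverse {n i j : ℕ} (hi : 1 ≤ i) (hij : i < j)
    (hjn : j ≤ n) :
    ((List.range' i (n - i)).reverse.map (sT n)).prod *
        ((List.range' j (n - j)).map (sT n)).prod =
      ((List.range' (j - 1) (n - j + 1)).map (sT n)).prod *
        ((List.range' i (n - 1 - i)).reverse.map (sT n)).prod := by
  ext x
  have hx := x.isLt
  rw [Equiv.Perm.mul_apply, Equiv.Perm.mul_apply,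
    val_prod_map_sT_reverse_range'_apply hi (by omega),
    val_prod_map_sT_range'_apply (by omega) (by omega),
    val_prod_map_sT_range'_apply (by omega) (by omega),
    val_prod_map_sT_reverse_range'_apply hi (by omega)]
  split_ifs <;> omega

/-- for `1 ≤ i < j ≤ n` one has
`g_i⁻¹ · g_j = s_{n-1} ∘ ⋯ ∘ s_i ∘ s_j ∘ ⋯ ∘ s_{n-1}
            = s_{j-1} ∘ s_j ∘ ⋯ ∘ s_{n-2} ∘ s_{n-1} ∘ s_{n-2} ∘ ⋯ ∘ s_{i+1} ∘ s_i`
(indices ascending from `j-1` to `n-1`, then descending from `n-2` to `i`). -/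
theorem stmt2 (n i j : ℕ) (hi1 : 1 ≤ i) (hij : i < j) (hjn : j ≤ n) :
    (gElt n i)⁻¹ * gElt n j =
        ((List.range' i (n - i)).reverse.map (sT n)).prod *
          ((List.range' j (n - j)).map (sT n)).prod ∧
    (gElt n i)⁻¹ * gElt n j =
        ((List.range' (j - 1) (n - j + 1)).map (sT n)).prod *
          ((List.range' i (n - 1 - i)).reverse.map (sT n)).prod :=
  ⟨gElt_inv_mul_gElt n i j,
    (gElt_inv_mul_gElt n i j).trans (prod_reverse_mul_prod_eq_prod_mul_prod_reverse hi1 hij hjn)⟩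
end

section
/- For every partition diagram P of type (a,b), the linear map T_P : V^{⊗a} → V^{⊗b} is S_n-equivariant: T_P(σ · x) = σ · T_P(x) for all σ ∈ S_n and x ∈ V^{⊗a}. -/
open scoped Classical

/-- A partition diagram of type `(a,b)`: a set partition of `Fin a ⊕ Fin b`
into nonempty blocks. -/
abbrev PartitionDiagram (a b : ℕ) :=
  Finpartition (Finset.univ : Finset (Fin a ⊕ Fin b))

/-- `Sum.elim f g` is constant on every block of `P`. -/
def Compatible {n a b : ℕ} (P : PartitionDiagram a b)
    (f : Fin a → Fin n) (g : Fin b → Fin n) : Prop :=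
  ∀ B ∈ P.parts, ∀ x ∈ B, ∀ y ∈ B, Sum.elim f g x = Sum.elim f g y

/-- The linear map `T_P : V^{⊗a} → V^{⊗b}` associated to a partition diagram `P`,
where `V^{⊗a}` is modelled as the free module on `Fin a → Fin n`, with basis vector
at `f` corresponding to `e_{f(1)} ⊗ ⋯ ⊗ e_{f(a)}`. -/
noncomputable def TP (k : Type*) [CommRing k] (n : ℕ) {a b : ℕ}
    (P : PartitionDiagram a b) :
    ((Fin a → Fin n) → k) →ₗ[k] ((Fin b → Fin n) → k) where
  toFun x g := ∑ f : Fin a → Fin n, if Compatible P f g then x f else 0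
  map_add' x y := by
    funext g
    simp only [Pi.add_apply]
    rw [← Finset.sum_add_distrib]
    exact Finset.sum_congr rfl fun f _ => by split <;> simp
  map_smul' c x := by
    funext g
    simp only [Pi.smul_apply, smul_eq_mul, RingHom.id_apply]
    rw [Finset.mul_sum]
    exact Finset.sum_congr rfl fun f _ => by split <;> simp

/-- The (diagonal) action of `σ ∈ S_n` on `V^{⊗a}`: on basis vectors it sends
`e_{f(1)} ⊗ ⋯ ⊗ e_{f(a)}` to `e_{σ(f(1))} ⊗ ⋯ ⊗ e_{σ(f(a))}`. -/
def permMap (k : Type*) [CommRing k] {n a : ℕ} (σ : Equiv.Perm (Fin n)) :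
    ((Fin a → Fin n) → k) →ₗ[k] ((Fin a → Fin n) → k) where
  toFun x f := x fun i => σ⁻¹ (f i)
  map_add' _ _ := rfl
  map_smul' _ _ := rfl

/-- `T_P` is `S_n`-equivariant. -/
theorem stmt4 (k : Type*) [CommRing k] (n a b : ℕ) (hn : 0 < n)
    (P : PartitionDiagram a b) (σ : Equiv.Perm (Fin n))
    (x : (Fin a → Fin n) → k) :
    TP k n P (permMap k σ x) = permMap k σ (TP k n P x) := by
  funext g
  show ∑ f : Fin a → Fin n, (if Compatible P f g then x (fun i => σ⁻¹ (f i)) else 0)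
      = ∑ f : Fin a → Fin n, (if Compatible P f (fun i => σ⁻¹ (g i)) then x f else 0)
  apply Finset.sum_nbij' (fun f => fun i => σ⁻¹ (f i)) (fun f => fun i => σ (f i))
  · intros; exact Finset.mem_univ _
  · intros; exact Finset.mem_univ _
  · intro f _; funext i; simp
  · intro f _; funext i; simp
  · intro f _
    have : Compatible P f g ↔ Compatible P (fun i => σ⁻¹ (f i)) (fun i => σ⁻¹ (g i)) := by
      constructor
      · intro h B hB u hu v hv
        have := h B hB u hu v hv
        cases u <;> cases v <;> simp_all
      · intro h B hB u hu v hv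
        have := h B hB u hu v hv
        cases u <;> cases v <;> simp_all
    simp only [this]
end

section
/- Let Q be a partition diagram of type (a,b) and P a partition diagram of type (b,c). Let ∼ be the smallest equivalence relation on Fin a ⊕ Fin b ⊕ Fin c identifying any two elements that lie in a common block of Q (viewed inside the first two summands) or in a common block of P (viewed inside the last two summands). Let α(P,Q) be the number of ∼-equivalence classes contained entirely in the middle summand Fin b, and let P⋆Q be the partition diagram of type (a,c) in which two elements of Fin a ⊕ Fin c lie in the same block if and only if they are ∼-equivalent. Then T_P ∘ T_Q = (n : k)^{α(P,Q)} · T_{P⋆Q} as k-linear maps V^{⊗a} → V^{⊗c}. -/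
open scoped Classical

/-- The relation on `Fin a ⊕ (Fin b ⊕ Fin c)` identifying two elements that lie in a
common block of `Q` (viewed in the first two summands) or in a common block of `P`
(viewed in the last two summands). -/
def midRel {a b c : ℕ} (Q : PartitionDiagram a b) (P : PartitionDiagram b c)
    (x y : Fin a ⊕ (Fin b ⊕ Fin c)) : Prop :=
  (∃ B ∈ Q.parts, ∃ u ∈ B, ∃ v ∈ B,
      x = Sum.elim Sum.inl (fun j => Sum.inr (Sum.inl j)) u ∧
      y = Sum.elim Sum.inl (fun j => Sum.inr (Sum.inl j)) v) ∨
  (∃ B ∈ P.parts, ∃ u ∈ B, ∃ v ∈ B,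
      x = Sum.elim (fun j => Sum.inr (Sum.inl j)) (fun j => Sum.inr (Sum.inr j)) u ∧
      y = Sum.elim (fun j => Sum.inr (Sum.inl j)) (fun j => Sum.inr (Sum.inr j)) v)

/-- `α(P,Q)`: the number of equivalence classes of the equivalence relation generated by
`midRel Q P` that are contained entirely in the middle summand `Fin b`. -/
noncomputable def alphaPQ {a b c : ℕ} (Q : PartitionDiagram a b)
    (P : PartitionDiagram b c) : ℕ :=
  Nat.card {t : Quotient (Relation.EqvGen.setoid (midRel Q P)) //
    ∀ x : Fin a ⊕ (Fin b ⊕ Fin c),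
      Quotient.mk (Relation.EqvGen.setoid (midRel Q P)) x = t →
        ∃ j : Fin b, x = Sum.inr (Sum.inl j)}

/-!
The coefficient of `x f` in `T_P (T_Q x)` at `h` is the number of middle labellings `g` for
which `(f, g, h)` is compatible with both diagrams, i.e. the number of labellings of the
`∼`-classes restricting to `Sum.elim f h` on the outer points. Such a labelling exists iff
`Sum.elim f h` is constant on the blocks of `P⋆Q` (the traces of `∼`-classes on the outer
summands), and then it is free exactly on the `α(P,Q)` classes lying in the middle, which
gives `n ^ α(P,Q)` choices.
-/

section Extension

variable {α β γ : Type*}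

noncomputable def extensionEquiv (π : α → β) (ψ : α → γ)
    (hψ : ∀ p q, π p = π q → ψ p = ψ q) :
    {F : β → γ // F ∘ π = ψ} ≃ (↥(Set.range π)ᶜ → γ) where
  toFun F t := F.1 t
  invFun G := ⟨fun t => if ht : t ∈ Set.range π then ψ ht.choose else G ⟨t, ht⟩, by
    funext p
    have hp : π p ∈ Set.range π := ⟨p, rfl⟩
    simpa [dif_pos hp] using hψ _ _ hp.choose_spec⟩
  left_inv F := by
    ext t
    by_cases ht : t ∈ Set.range π
    · simp only [dif_pos ht, ← F.2, Function.comp_apply, ht.choose_spec]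
    · simp only [dif_neg ht]
  right_inv G := funext fun t => dif_neg t.2

theorem card_extensions [Finite β] (π : α → β) (ψ : α → γ) :
    Nat.card {F : β → γ // F ∘ π = ψ} =
      if ∀ p q, π p = π q → ψ p = ψ q then Nat.card γ ^ Nat.card ↥(Set.range π)ᶜ else 0 := by
  split_ifs with hψ
  · rw [Nat.card_congr (extensionEquiv π ψ hψ), Nat.card_fun]
  · have : IsEmpty {F : β → γ // F ∘ π = ψ} := ⟨fun F => hψ fun p q hpq => by
      rw [← F.2, Function.comp_apply, Function.comp_apply, hpq]⟩
    exact Nat.card_of_isEmpty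

end Extension

section Composition

variable {n a b c : ℕ} (Q : PartitionDiagram a b) (P : PartitionDiagram b c)

abbrev midSetoid : Setoid (Fin a ⊕ (Fin b ⊕ Fin c)) := Relation.EqvGen.setoid (midRel Q P)

def outerClass (p : Fin a ⊕ Fin c) : Quotient (midSetoid Q P) :=
  Quotient.mk _ (Sum.map id Sum.inr p)

theorem compatible_and_compatible_iff (f : Fin a → Fin n) (g : Fin b → Fin n)
    (h : Fin c → Fin n) :
    Compatible Q f g ∧ Compatible P g h ↔
      ∀ x y, midRel Q P x y → Sum.elim f (Sum.elim g h) x = Sum.elim f (Sum.elim g h) y := by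
  constructor
  · rintro ⟨hQ, hP⟩ x y (⟨B, hB, u, hu, v, hv, rfl, rfl⟩ | ⟨B, hB, u, hu, v, hv, rfl, rfl⟩)
    · have := hQ B hB u hu v hv
      cases u <;> cases v <;> simpa using this
    · have := hP B hB u hu v hv
      cases u <;> cases v <;> simpa using this
  · intro H
    constructor
    · intro B hB u hu v hv
      have := H _ _ (Or.inl ⟨B, hB, u, hu, v, hv, rfl, rfl⟩)
      cases u <;> cases v <;> simpa using this
    · intro B hB u hu v hv
      have := H _ _ (Or.inr ⟨B, hB, u, hu, v, hv, rfl, rfl⟩)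
      cases u <;> cases v <;> simpa using this

theorem apply_mk_eq_sumElim {f : Fin a → Fin n} {h : Fin c → Fin n}
    {F : Quotient (midSetoid Q P) → Fin n} (hF : F ∘ outerClass Q P = Sum.elim f h)
    (x : Fin a ⊕ (Fin b ⊕ Fin c)) :
    F (Quotient.mk _ x) =
      Sum.elim f (Sum.elim (fun j => F (Quotient.mk _ (Sum.inr (Sum.inl j)))) h) x := by
  rcases x with i | j | m
  · exact congrFun hF (Sum.inl i)
  · rfl
  · exact congrFun hF (Sum.inr m)

noncomputable def compatibleMiddleEquiv (f : Fin a → Fin n) (h : Fin c → Fin n) :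
    {g : Fin b → Fin n // Compatible Q f g ∧ Compatible P g h} ≃
      {F : Quotient (midSetoid Q P) → Fin n // F ∘ outerClass Q P = Sum.elim f h} where
  toFun g := ⟨Quotient.lift (Sum.elim f (Sum.elim g.1 h)) fun _ _ hxy =>
      Setoid.eqvGen_le (s := Setoid.ker _) ((compatible_and_compatible_iff Q P f g.1 h).1 g.2)
        hxy,
    by funext p; cases p <;> rfl⟩
  invFun F := ⟨fun j => F.1 (Quotient.mk _ (Sum.inr (Sum.inl j))), by
    rw [compatible_and_compatible_iff]
    intro x y hxy
    rw [← apply_mk_eq_sumElim Q P F.2, ← apply_mk_eq_sumElim Q P F.2,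
      Quotient.sound (Relation.EqvGen.rel x y hxy)]⟩
  left_inv g := rfl
  right_inv F := Subtype.ext <| funext fun t =>
    Quotient.inductionOn t fun x => (apply_mk_eq_sumElim Q P F.2 x).symm

theorem notMem_range_outerClass_iff (t : Quotient (midSetoid Q P)) :
    t ∉ Set.range (outerClass Q P) ↔
      ∀ x, Quotient.mk (midSetoid Q P) x = t → ∃ j : Fin b, x = Sum.inr (Sum.inl j) := by
  constructor
  · rintro ht (i | j | m) rfl
    · exact absurd ⟨Sum.inl i, rfl⟩ ht
    · exact ⟨j, rfl⟩
    · exact absurd ⟨Sum.inr m, rfl⟩ ht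
  · rintro ht ⟨p, rfl⟩
    obtain ⟨j, hj⟩ := ht _ rfl
    cases p <;> simp at hj

theorem card_compl_range_outerClass :
    Nat.card ↥(Set.range (outerClass Q P))ᶜ = alphaPQ Q P :=
  Nat.card_congr (Equiv.subtypeEquivRight (notMem_range_outerClass_iff Q P))

theorem outerClass_eq_iff {R : PartitionDiagram a c}
    (hR : ∀ x y : Fin a ⊕ Fin c,
      (∃ B ∈ R.parts, x ∈ B ∧ y ∈ B) ↔
        Relation.EqvGen (midRel Q P) (Sum.map id Sum.inr x) (Sum.map id Sum.inr y))
    (p q : Fin a ⊕ Fin c) :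
    outerClass Q P p = outerClass Q P q ↔ ∃ B ∈ R.parts, p ∈ B ∧ q ∈ B :=
  Quotient.eq.trans (hR p q).symm

theorem card_compatible_middle {R : PartitionDiagram a c}
    (hR : ∀ x y : Fin a ⊕ Fin c,
      (∃ B ∈ R.parts, x ∈ B ∧ y ∈ B) ↔
        Relation.EqvGen (midRel Q P) (Sum.map id Sum.inr x) (Sum.map id Sum.inr y))
    (f : Fin a → Fin n) (h : Fin c → Fin n) :
    Nat.card {g : Fin b → Fin n // Compatible Q f g ∧ Compatible P g h} =
      if Compatible R f h then n ^ alphaPQ Q P else 0 := by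
  have hfiber : (∀ p q, outerClass Q P p = outerClass Q P q → Sum.elim f h p = Sum.elim f h q) ↔
      Compatible R f h := by
    simp only [outerClass_eq_iff Q P hR, Compatible]
    exact ⟨fun H B hB p hp q hq => H p q ⟨B, hB, hp, hq⟩,
      fun H p q ⟨B, hB, hp, hq⟩ => H B hB p hp q hq⟩
  rw [Nat.card_congr (compatibleMiddleEquiv Q P f h), card_extensions, Nat.card_fin,
    card_compl_range_outerClass]
  simp only [hfiber]

end Composition

theorem TP_comp_TP_apply (k : Type*) [CommRing k] {n a b c : ℕ}
    (Q : PartitionDiagram a b) (P : PartitionDiagram b c) (x : (Fin a → Fin n) → k)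
    (h : Fin c → Fin n) :
    (TP k n P).comp (TP k n Q) x h =
      ∑ f, (Nat.card {g : Fin b → Fin n // Compatible Q f g ∧ Compatible P g h} : k) * x f := by
  simp only [TP, LinearMap.coe_comp, LinearMap.coe_mk, AddHom.coe_mk, Function.comp_apply,
    Nat.card_eq_fintype_card, Fintype.card_subtype, Finset.natCast_card_filter, Finset.sum_mul,
    ite_mul, one_mul, zero_mul, ite_and]
  rw [Finset.sum_comm]
  refine Finset.sum_congr rfl fun g _ => ?_
  split_ifs <;> simp

theorem stmt5_general (k : Type*) [CommRing k] (n : ℕ) {a b c : ℕ}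
    (Q : PartitionDiagram a b) (P : PartitionDiagram b c)
    (R : PartitionDiagram a c)
    (hR : ∀ x y : Fin a ⊕ Fin c,
      (∃ B ∈ R.parts, x ∈ B ∧ y ∈ B) ↔
        Relation.EqvGen (midRel Q P)
          (Sum.map id Sum.inr x) (Sum.map id Sum.inr y)) :
    (TP k n P).comp (TP k n Q) = ((n : k) ^ alphaPQ Q P) • TP k n R := by
  refine LinearMap.ext fun x => funext fun h => ?_
  rw [TP_comp_TP_apply, LinearMap.smul_apply]
  simp only [card_compatible_middle Q P hR, TP, LinearMap.coe_mk, AddHom.coe_mk, Pi.smul_apply,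
    smul_eq_mul, Finset.mul_sum]
  refine Finset.sum_congr rfl fun f _ => ?_
  split_ifs <;> simp

/-- composition of the maps associated to partition diagrams,
with `t = n`: `T_P ∘ T_Q = n^{α(P,Q)} · T_{P⋆Q}`, where `P⋆Q` is any partition
diagram of type `(a,c)` whose blocks are given by the generated equivalence relation. -/
theorem stmt5 (k : Type*) [CommRing k] (n : ℕ) (hn : 0 < n) {a b c : ℕ}
    (Q : PartitionDiagram a b) (P : PartitionDiagram b c)
    (R : PartitionDiagram a c)
    (hR : ∀ x y : Fin a ⊕ Fin c,
      (∃ B ∈ R.parts, x ∈ B ∧ y ∈ B) ↔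
        Relation.EqvGen (midRel Q P)
          (Sum.map id Sum.inr x) (Sum.map id Sum.inr y)) :
    (TP k n P).comp (TP k n Q) = ((n : k) ^ alphaPQ Q P) • TP k n R :=
  stmt5_general k n Q P R hR
end

section
/- Let P be a partition diagram of type (a,b) and Q a partition diagram of type (c,d), and let P ⊗ Q denote the partition diagram of type (a+c, b+d) whose blocks are the blocks of P (under the canonical inclusion of Fin a ⊕ Fin b into Fin (a+c) ⊕ Fin (b+d) as the first a, resp. first b, coordinates) together with the blocks of Q (under the complementary inclusion). Then, under the canonical isomorphisms V^{⊗(a+c)} ≅ V^{⊗a} ⊗ V^{⊗c} and V^{⊗(b+d)} ≅ V^{⊗b} ⊗ V^{⊗d}, one has T_{P ⊗ Q} = T_P ⊗ T_Q. -/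
open scoped Classical

/-- The canonical equivalence `(Fin (a+c) → Fin n) ≃ (Fin a → Fin n) × (Fin c → Fin n)`. -/
def splitEquiv (n a c : ℕ) :
    (Fin (a + c) → Fin n) ≃ (Fin a → Fin n) × (Fin c → Fin n) :=
  (Equiv.arrowCongr finSumFinEquiv (Equiv.refl (Fin n))).symm.trans
    (Equiv.sumArrowEquivProdArrow _ _ _)

/-- The canonical isomorphism `V^{⊗(a+c)} ≅ V^{⊗a} ⊗ V^{⊗c}`, sending the basis vector
`e_f` to `e_{f ∘ castAdd} ⊗ e_{f ∘ natAdd}`. -/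
noncomputable def splitLinear (k : Type*) [CommRing k] (n a c : ℕ) :
    ((Fin (a + c) → Fin n) → k) ≃ₗ[k]
      TensorProduct k ((Fin a → Fin n) → k) ((Fin c → Fin n) → k) :=
  Module.Basis.equiv (Pi.basisFun k (Fin (a + c) → Fin n))
    ((Pi.basisFun k (Fin a → Fin n)).tensorProduct (Pi.basisFun k (Fin c → Fin n)))
    (splitEquiv n a c)

/-!
A diagram map is determined by its values on basis tensors `e_F`. A labelling `(F, G)` is
compatible with the juxtaposition `R` of `P` and `Q` exactly when its left halves are compatible
with `P` and its right halves with `Q`, so `T_R e_F` is the sum of `e_{G₁} ⊗ e_{G₂}` over the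
pairs `(G₁, G₂)` compatible with `P` and `Q` separately, i.e. `T_P e_{F₁} ⊗ T_Q e_{F₂}`.
-/

section

variable {k : Type*} [CommRing k] {n a b c d : ℕ}

lemma splitEquiv_apply (F : Fin (a + c) → Fin n) :
    splitEquiv n a c F = (F ∘ Fin.castAdd c, F ∘ Fin.natAdd a) := by
  ext i <;> simp [splitEquiv, Equiv.sumArrowEquivProdArrow]

lemma splitLinear_single (F : Fin (a + c) → Fin n) :
    splitLinear k n a c (Pi.single F 1) =
      Pi.single (F ∘ Fin.castAdd c) 1 ⊗ₜ[k] Pi.single (F ∘ Fin.natAdd a) 1 := by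
  rw [← Pi.basisFun_apply, splitLinear, Module.Basis.equiv_apply, splitEquiv_apply,
    Module.Basis.tensorProduct_apply, Pi.basisFun_apply, Pi.basisFun_apply]

lemma TP_single (P : PartitionDiagram a b) (f : Fin a → Fin n) :
    TP k n P (Pi.single f 1) = ∑ g with Compatible P f g, Pi.single g 1 := by
  ext g
  simp only [TP, LinearMap.coe_mk, AddHom.coe_mk, Finset.sum_apply, Pi.single_apply]
  rw [Fintype.sum_eq_single f fun f' hf' => by simp [hf']]
  simp

lemma compatible_iff_of_parts_eq {P : PartitionDiagram a b} {Q : PartitionDiagram c d}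
    {R : PartitionDiagram (a + c) (b + d)}
    (hR : R.parts =
      P.parts.image (fun B => B.image (Sum.map (Fin.castAdd c) (Fin.castAdd d))) ∪
      Q.parts.image (fun B => B.image (Sum.map (Fin.natAdd a) (Fin.natAdd b))))
    (F : Fin (a + c) → Fin n) (G : Fin (b + d) → Fin n) :
    Compatible R F G ↔
      Compatible P (F ∘ Fin.castAdd c) (G ∘ Fin.castAdd d) ∧
      Compatible Q (F ∘ Fin.natAdd a) (G ∘ Fin.natAdd b) := by
  simp only [Compatible, hR, Finset.forall_mem_union, Finset.forall_mem_image, Sum.elim_map]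

end

theorem stmt6_general (k : Type*) [CommRing k] (n : ℕ) (a b c d : ℕ)
    (P : PartitionDiagram a b) (Q : PartitionDiagram c d)
    (R : PartitionDiagram (a + c) (b + d))
    (hR : R.parts =
      P.parts.image
        (fun B => B.image (Sum.map (Fin.castAdd c) (Fin.castAdd d))) ∪
      Q.parts.image
        (fun B => B.image (Sum.map (Fin.natAdd a) (Fin.natAdd b)))) :
    (splitLinear k n b d).toLinearMap ∘ₗ TP k n R =
      TensorProduct.map (TP k n P) (TP k n Q) ∘ₗ (splitLinear k n a c).toLinearMap := by
  refine (Pi.basisFun k _).ext fun F => ?_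
  simp only [LinearMap.coe_comp, LinearEquiv.coe_coe, Function.comp_apply, Pi.basisFun_apply,
    TP_single, map_sum, splitLinear_single, TensorProduct.map_tmul, TensorProduct.sum_tmul,
    TensorProduct.tmul_sum]
  rw [← Finset.sum_product_right']
  exact Finset.sum_equiv (splitEquiv n b d)
    (fun G => by simp [splitEquiv_apply, compatible_iff_of_parts_eq hR])
    (fun G _ => by rw [splitEquiv_apply])

/-- `T_{P ⊗ Q} = T_P ⊗ T_Q` under the canonical isomorphisms
`V^{⊗(a+c)} ≅ V^{⊗a} ⊗ V^{⊗c}` and `V^{⊗(b+d)} ≅ V^{⊗b} ⊗ V^{⊗d}`, where `P ⊗ Q`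
is the horizontal juxtaposition of the partition diagrams `P` and `Q`. -/
theorem stmt6 (k : Type*) [CommRing k] (n : ℕ) (hn : 0 < n) (a b c d : ℕ)
    (P : PartitionDiagram a b) (Q : PartitionDiagram c d)
    (R : PartitionDiagram (a + c) (b + d))
    (hR : R.parts =
      P.parts.image
        (fun B => B.image (Sum.map (Fin.castAdd c) (Fin.castAdd d))) ∪
      Q.parts.image
        (fun B => B.image (Sum.map (Fin.natAdd a) (Fin.natAdd b)))) :
    (splitLinear k n b d).toLinearMap ∘ₗ TP k n R =
      TensorProduct.map (TP k n P) (TP k n Q) ∘ₗ (splitLinear k n a c).toLinearMap :=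
  stmt6_general k n a b c d P Q R hR
end

section
/- Every S_n-equivariant k-linear map F : V^{⊗a} → V^{⊗b} is a k-linear combination of the maps T_P, where P ranges over the partition diagrams of type (a,b). (Fullness of the functor Φ_n from the partition category to S_n-modules.) -/
open scoped Classical

/-! The matrix entry `F (e_f) g` of an `S_n`-equivariant `F` depends only on the kernel partition
of `Sum.elim f g`, since two pairs `(f, g)` with the same kernel differ by a permutation of
`Fin n`. So `F` is a combination of the maps `kernelMap Q`, whose matrix is the indicator of
"the kernel of `Sum.elim f g` is `Q`". Conversely `T_Q` is the sum of `kernelMap R` over all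
coarsenings `R ≥ Q`; this relation is unitriangular, so downward induction on `Q` puts every
`kernelMap Q` in the span of the `T_P`. -/

namespace Finpartition

variable {α : Type*} [Fintype α] [DecidableEq α]

theorem le_ofSetoid_iff (P : Finpartition (Finset.univ : Finset α)) (s : Setoid α)
    [DecidableRel s.r] :
    P ≤ ofSetoid s ↔ ∀ B ∈ P.parts, ∀ x ∈ B, ∀ y ∈ B, s x y := by
  constructor
  · intro hle B hB x hx y hy
    obtain ⟨C, hC, hBC⟩ := hle hB
    obtain ⟨z, hz⟩ := (ofSetoid s).nonempty_of_mem_parts hC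
    rw [← (ofSetoid s).part_eq_of_mem hC hz] at hBC
    exact s.trans (s.symm (mem_part_ofSetoid_iff_rel.mp (hBC hx)))
      (mem_part_ofSetoid_iff_rel.mp (hBC hy))
  · intro hs B hB
    obtain ⟨x, hx⟩ := P.nonempty_of_mem_parts hB
    exact ⟨(ofSetoid s).part x, (ofSetoid s).part_mem.mpr (Finset.mem_univ x),
      fun y hy => mem_part_ofSetoid_iff_rel.mpr (hs B hB x hx y hy)⟩

theorem eq_of_ofSetoid_eq {s t : Setoid α} [DecidableRel s.r] [DecidableRel t.r]
    (h : ofSetoid s = ofSetoid t) : s = t := by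
  ext x y
  rw [← mem_part_ofSetoid_iff_rel, h, mem_part_ofSetoid_iff_rel]

end Finpartition

theorem Equiv.Perm.exists_comp_eq_of_ker_eq {α β : Type*} [Finite β] {h h' : α → β}
    (hker : Setoid.ker h = Setoid.ker h') : ∃ σ : Equiv.Perm β, σ ∘ h = h' := by
  let e : Set.range h ≃ Set.range h' :=
    (Setoid.quotientKerEquivRange h).symm.trans
      ((Quotient.congrRight fun x y => by rw [hker]).trans (Setoid.quotientKerEquivRange h'))
  refine ⟨e.extendSubtype, funext fun x => ?_⟩
  have hx : (Setoid.quotientKerEquivRange h).symm ⟨h x, x, rfl⟩ = Quotient.mk _ x :=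
    (Equiv.symm_apply_eq _).mpr rfl
  rw [Function.comp_apply, e.extendSubtype_apply_of_mem _ (Set.mem_range_self x)]
  simp only [e, Equiv.trans_apply, hx]
  rfl

noncomputable def kernelDiagram {n a b : ℕ} (f : Fin a → Fin n) (g : Fin b → Fin n) :
    PartitionDiagram a b :=
  Finpartition.ofSetoid (Setoid.ker (Sum.elim f g))

section PartitionDiagram

variable {k : Type*} [CommRing k] {n a b : ℕ}

theorem le_kernelDiagram_iff (P : PartitionDiagram a b) (f : Fin a → Fin n)
    (g : Fin b → Fin n) : P ≤ kernelDiagram f g ↔ Compatible P f g :=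
  Finpartition.le_ofSetoid_iff P _

theorem exists_perm_of_kernelDiagram_eq {f f' : Fin a → Fin n} {g g' : Fin b → Fin n}
    (h : kernelDiagram f g = kernelDiagram f' g') :
    ∃ σ : Equiv.Perm (Fin n), σ ∘ f = f' ∧ σ ∘ g = g' := by
  obtain ⟨σ, hσ⟩ := Equiv.Perm.exists_comp_eq_of_ker_eq (Finpartition.eq_of_ofSetoid_eq h)
  exact ⟨σ, congrArg (· ∘ Sum.inl) hσ, congrArg (· ∘ Sum.inr) hσ⟩

variable (k n) in
noncomputable def kernelMap (Q : PartitionDiagram a b) :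
    ((Fin a → Fin n) → k) →ₗ[k] ((Fin b → Fin n) → k) :=
  Matrix.toLin' (Matrix.of fun g f => if kernelDiagram f g = Q then 1 else 0)

theorem kernelMap_single_apply (Q : PartitionDiagram a b) (f : Fin a → Fin n) (c : k)
    (g : Fin b → Fin n) :
    kernelMap k n Q (Pi.single f c) g = if kernelDiagram f g = Q then c else 0 := by
  simp [kernelMap]

theorem TP_single_apply (P : PartitionDiagram a b) (f : Fin a → Fin n) (c : k)
    (g : Fin b → Fin n) :
    TP k n P (Pi.single f c) g = if Compatible P f g then c else 0 := by
  simp only [TP, LinearMap.coe_mk, AddHom.coe_mk]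
  rw [Finset.sum_eq_single f (fun f' _ hf' => by simp [hf']) (by simp)]
  simp

theorem TP_eq_sum_kernelMap (Q : PartitionDiagram a b) :
    TP k n Q = ∑ R ∈ Finset.univ.filter (Q ≤ ·), kernelMap k n R := by
  ext f g
  simp [TP_single_apply, kernelMap_single_apply, le_kernelDiagram_iff]

theorem kernelMap_mem_span_TP (Q : PartitionDiagram a b) :
    kernelMap k n Q ∈ Submodule.span k (Set.range fun P : PartitionDiagram a b => TP k n P) := by
  induction Q using WellFoundedGT.induction with
  | _ Q ih =>
    have hsplit :
        TP k n Q = kernelMap k n Q + ∑ R ∈ Finset.univ.filter (Q < ·), kernelMap k n R := by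
      have hQ : Q ∈ Finset.univ.filter (Q ≤ ·) :=
        Finset.mem_filter.mpr ⟨Finset.mem_univ Q, le_rfl⟩
      rw [TP_eq_sum_kernelMap, ← Finset.add_sum_erase _ _ hQ]
      congr 2
      ext R
      simp [lt_iff_le_and_ne, and_comm, eq_comm]
    rw [← add_sub_cancel_right (kernelMap k n Q), ← hsplit]
    exact Submodule.sub_mem _ (Submodule.subset_span ⟨Q, rfl⟩)
      (Submodule.sum_mem _ fun R hR => ih R (Finset.mem_filter.mp hR).2)

theorem eq_sum_smul_kernelMap (F : ((Fin a → Fin n) → k) →ₗ[k] ((Fin b → Fin n) → k))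
    (c : PartitionDiagram a b → k)
    (hc : ∀ f g, F (Pi.single f 1) g = c (kernelDiagram f g)) :
    F = ∑ Q, c Q • kernelMap k n Q := by
  ext f g
  simp [hc, kernelMap_single_apply]

theorem permMap_single (σ : Equiv.Perm (Fin n)) (f : Fin a → Fin n) (c : k) :
    permMap k σ (Pi.single f c) = Pi.single (σ ∘ f) c := by
  ext f'
  simp [permMap, Pi.single_apply, funext_iff, Equiv.eq_symm_apply, eq_comm]

theorem apply_single_apply_eq_of_kernelDiagram_eq
    {F : ((Fin a → Fin n) → k) →ₗ[k] ((Fin b → Fin n) → k)}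
    (hF : ∀ (σ : Equiv.Perm (Fin n)) x, F (permMap k σ x) = permMap k σ (F x))
    {f f' : Fin a → Fin n} {g g' : Fin b → Fin n}
    (h : kernelDiagram f g = kernelDiagram f' g') :
    F (Pi.single f 1) g = F (Pi.single f' 1) g' := by
  obtain ⟨σ, rfl, rfl⟩ := exists_perm_of_kernelDiagram_eq h
  rw [← permMap_single, hF]
  simp [permMap, Function.comp_def]

end PartitionDiagram

theorem stmt7_general (k : Type*) [CommRing k] (n a b : ℕ)
    (F : ((Fin a → Fin n) → k) →ₗ[k] ((Fin b → Fin n) → k))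
    (hF : ∀ (σ : Equiv.Perm (Fin n)) (x : (Fin a → Fin n) → k),
      F (permMap k σ x) = permMap k σ (F x)) :
    F ∈ Submodule.span k (Set.range fun P : PartitionDiagram a b => TP k n P) := by
  have hfactor : Function.FactorsThrough
      (fun p : (Fin a → Fin n) × (Fin b → Fin n) => F (Pi.single p.1 1) p.2)
      (fun p => kernelDiagram p.1 p.2) :=
    fun _ _ h => apply_single_apply_eq_of_kernelDiagram_eq hF h
  rw [eq_sum_smul_kernelMap F _ fun f g => (hfactor.extend_apply 0 (f, g)).symm]
  exact Submodule.sum_mem _ fun Q _ => Submodule.smul_mem _ _ (kernelMap_mem_span_TP Q)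

/-- every `S_n`-equivariant `k`-linear map `V^{⊗a} → V^{⊗b}` is a
`k`-linear combination of the maps `T_P` (fullness of `Φ_n`). -/
theorem stmt7 (k : Type*) [CommRing k] (n a b : ℕ) (hn : 0 < n)
    (F : ((Fin a → Fin n) → k) →ₗ[k] ((Fin b → Fin n) → k))
    (hF : ∀ (σ : Equiv.Perm (Fin n)) (x : (Fin a → Fin n) → k),
      F (permMap k σ x) = permMap k σ (F x)) :
    F ∈ Submodule.span k (Set.range fun P : PartitionDiagram a b => TP k n P) :=
  stmt7_general k n a b F hF
end

section
/- Assume k is a nontrivial commutative ring and a + b > n. Then the family of linear maps (T_P), indexed by the partition diagrams P of type (a,b), is linearly dependent over k; equivalently, the k-linear map from the free k-module on the set of partition diagrams of type (a,b) to Hom_k(V^{⊗a}, V^{⊗b}) sending P to T_P is not injective. -/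
open scoped Classical

/-!
Möbius inversion on the lattice of partition diagrams. The coefficient of `T_P` at the basis
pair `(f, g)` is `1` exactly when `P` refines the kernel partition `q` of `Sum.elim f g`, so the
`(f, g)`-coefficient of `∑ P, μ(⊥, P) • T_P` is `∑ P ≤ q, μ(⊥, P)`, which vanishes unless
`q = ⊥`. Since `n < a + b`, `Sum.elim f g` is never injective, so `q ≠ ⊥` always and the
combination is zero, while its coefficient at `⊥` is `μ(⊥, ⊥) = 1`.
-/

open Finset IncidenceAlgebra

namespace Finpartition

variable {α β : Type*} [Fintype α] [DecidableEq α]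

noncomputable def ker (h : α → β) : Finpartition (univ : Finset α) := ofSetoid (Setoid.ker h)

lemma mem_part_ker_iff {h : α → β} {x y : α} : y ∈ (ker h).part x ↔ h x = h y :=
  mem_part_ofSetoid_iff_rel

lemma le_ker_iff {P : Finpartition (univ : Finset α)} {h : α → β} :
    P ≤ ker h ↔ ∀ B ∈ P.parts, ∀ x ∈ B, ∀ y ∈ B, h x = h y := by
  constructor
  · intro hle B hB x hx y hy
    obtain ⟨C, hC, hBC⟩ := hle hB
    rw [← mem_part_ker_iff, part_eq_of_mem _ hC (hBC hx)]
    exact hBC hy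
  · intro hP B hB
    obtain ⟨x, hx⟩ := P.nonempty_of_mem_parts hB
    exact ⟨(ker h).part x, (ker h).part_mem.2 (mem_univ x),
      fun y hy => mem_part_ker_iff.2 (hP B hB x hx y hy)⟩

lemma injective_of_ker_eq_bot {h : α → β} (hbot : ker h = ⊥) : Function.Injective h := by
  intro x y hxy
  have hsingleton : (⊥ : Finpartition (univ : Finset α)).part x = {x} :=
    part_eq_of_mem _ (mem_bot_iff.2 ⟨x, mem_univ x, rfl⟩) (mem_singleton_self x)
  have hy : y ∈ (ker h).part x := mem_part_ker_iff.2 hxy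
  rw [hbot, hsingleton, mem_singleton] at hy
  exact hy.symm

lemma ker_ne_bot_of_card_lt [Fintype β] {h : α → β} (hcard : Fintype.card β < Fintype.card α) :
    ker h ≠ ⊥ := fun hbot =>
  (Fintype.card_le_of_injective h (injective_of_ker_eq_bot hbot)).not_gt hcard

end Finpartition

lemma sum_mu_bot_of_le_eq_zero {𝕜 α : Type*} [AddCommGroup 𝕜] [One 𝕜] [PartialOrder α]
    [OrderBot α] [Fintype α] [LocallyFiniteOrder α] [DecidableEq α] [DecidableLE α]
    {q : α} (hq : q ≠ ⊥) :
    ∑ p, (if p ≤ q then mu 𝕜 ⊥ p else 0) = 0 := by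
  rw [← sum_filter, filter_ge_eq_Iic, Iic_eq_Icc, sum_Icc_mu_right, if_neg hq.symm]

lemma compatible_iff_le_ker {n a b : ℕ} {P : PartitionDiagram a b} {f : Fin a → Fin n}
    {g : Fin b → Fin n} : Compatible P f g ↔ P ≤ Finpartition.ker (Sum.elim f g) :=
  Finpartition.le_ker_iff.symm

lemma TP_apply (k : Type*) [CommRing k] (n : ℕ) {a b : ℕ} (P : PartitionDiagram a b)
    (x : (Fin a → Fin n) → k) (g : Fin b → Fin n) :
    TP k n P x g = ∑ f, if Compatible P f g then x f else 0 :=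
  rfl

lemma sum_mu_bot_smul_TP_eq_zero (k : Type*) [CommRing k] {n a b : ℕ} (hab : n < a + b)
    [LocallyFiniteOrder (PartitionDiagram a b)] :
    ∑ P : PartitionDiagram a b, mu k ⊥ P • TP k n P = 0 := by
  have hcard : Fintype.card (Fin n) < Fintype.card (Fin a ⊕ Fin b) := by simpa using hab
  refine LinearMap.ext fun x => funext fun g => ?_
  simp only [LinearMap.sum_apply, LinearMap.smul_apply, Finset.sum_apply, Pi.smul_apply,
    TP_apply, smul_eq_mul, mul_sum, LinearMap.zero_apply, Pi.zero_apply]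
  rw [sum_comm]
  refine sum_eq_zero fun f _ => ?_
  calc ∑ P : PartitionDiagram a b, mu k ⊥ P * (if Compatible P f g then x f else 0)
      = (∑ P : PartitionDiagram a b,
          if P ≤ Finpartition.ker (Sum.elim f g) then mu k ⊥ P else 0) * x f := by
        rw [sum_mul]
        refine sum_congr rfl fun P _ => ?_
        simp only [compatible_iff_le_ker]
        split_ifs <;> simp
    _ = 0 := by rw [sum_mu_bot_of_le_eq_zero (Finpartition.ker_ne_bot_of_card_lt hcard), zero_mul]

theorem stmt9_general (k : Type*) [CommRing k] [Nontrivial k] (n a b : ℕ)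
    (hab : n < a + b) :
    ¬ LinearIndependent k fun P : PartitionDiagram a b => TP k n P := by
  let : LocallyFiniteOrder (PartitionDiagram a b) := Fintype.toLocallyFiniteOrder
  intro hli
  have hmu := Fintype.linearIndependent_iff.mp hli (fun P => mu k ⊥ P)
    (sum_mu_bot_smul_TP_eq_zero k hab) ⊥
  rw [mu_self] at hmu
  exact one_ne_zero hmu

/-- if `k` is a nontrivial commutative ring and `a + b > n`, the family
`(T_P)` indexed by partition diagrams of type `(a,b)` is linearly dependent. -/
theorem stmt9 (k : Type*) [CommRing k] [Nontrivial k] (n a b : ℕ) (hn : 0 < n)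
    (hab : n < a + b) :
    ¬ LinearIndependent k fun P : PartitionDiagram a b => TP k n P :=
  stmt9_general k n a b hab
end

section
/- Suppose X and Y are objects that are both left and right dual to each other, i.e., there are exact pairings ExactPairing X Y (with η : 𝟙 ⟶ X ⊗ Y, ε : Y ⊗ X ⟶ 𝟙) and ExactPairing Y X (with η' : 𝟙 ⟶ Y ⊗ X, ε' : X ⊗ Y ⟶ 𝟙). Set A = X ⊗ Y, define m : A ⊗ A ⟶ A as (up to associators) id_X ⊗ ε ⊗ id_Y and Δ : A ⟶ A ⊗ A as (up to associators) id_X ⊗ η' ⊗ id_Y. Then the Frobenius compatibility equations hold: (id_A ⊗ m) ∘ (Δ ⊗ id_A) = Δ ∘ m = (m ⊗ id_A) ∘ (id_A ⊗ Δ), with associators inserted appropriately. -/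
open CategoryTheory MonoidalCategory

/-- The multiplication `m : (X ⊗ Y) ⊗ (X ⊗ Y) ⟶ X ⊗ Y` obtained (up to associators)
from `id_X ⊗ ε ⊗ id_Y`, where `ε = ε_ X Y : Y ⊗ X ⟶ 𝟙` is the evaluation of an exact
pairing `ExactPairing X Y`. -/
noncomputable def pairMul {C : Type*} [Category C] [MonoidalCategory C]
    (X Y : C) [ExactPairing X Y] : (X ⊗ Y) ⊗ (X ⊗ Y) ⟶ X ⊗ Y :=
  (α_ X Y (X ⊗ Y)).hom ≫
    (X ◁ ((α_ Y X Y).inv ≫ (ε_ X Y ▷ Y) ≫ (λ_ Y).hom))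

/-- The comultiplication `Δ : X ⊗ Y ⟶ (X ⊗ Y) ⊗ (X ⊗ Y)` obtained (up to associators)
from `id_X ⊗ η' ⊗ id_Y`, where `η' = η_ Y X : 𝟙 ⟶ Y ⊗ X` is the coevaluation of an
exact pairing `ExactPairing Y X`. -/
noncomputable def pairComul {C : Type*} [Category C] [MonoidalCategory C]
    (X Y : C) [ExactPairing Y X] : X ⊗ Y ⟶ (X ⊗ Y) ⊗ (X ⊗ Y) :=
  (X ◁ ((λ_ Y).inv ≫ (η_ Y X ▷ Y) ≫ (α_ Y X Y).hom)) ≫ (α_ X Y (X ⊗ Y)).inv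

/-- when `X` and `Y` are both left and right dual to each other, the
multiplication `m` and comultiplication `Δ` on `A = X ⊗ Y` satisfy the Frobenius
compatibility equations
`(id_A ⊗ m) ∘ (Δ ⊗ id_A) = Δ ∘ m = (m ⊗ id_A) ∘ (id_A ⊗ Δ)`
(with associators inserted appropriately). -/
theorem stmt14 {C : Type*} [Category C] [MonoidalCategory C]
    (X Y : C) [ExactPairing X Y] [ExactPairing Y X] :
    ((pairComul X Y ▷ (X ⊗ Y)) ≫ (α_ (X ⊗ Y) (X ⊗ Y) (X ⊗ Y)).hom ≫
        ((X ⊗ Y) ◁ pairMul X Y) = pairMul X Y ≫ pairComul X Y) ∧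
    (((X ⊗ Y) ◁ pairComul X Y) ≫ (α_ (X ⊗ Y) (X ⊗ Y) (X ⊗ Y)).inv ≫
        (pairMul X Y ▷ (X ⊗ Y)) = pairMul X Y ≫ pairComul X Y) := by
  have exch1 : ε_ X Y ≫ η_ Y X =
      (λ_ (Y ⊗ X)).inv ≫ η_ Y X ▷ (Y ⊗ X) ≫ (Y ⊗ X) ◁ ε_ X Y ≫ (ρ_ (Y ⊗ X)).hom := by
    slice_rhs 2 3 => rw [← whisker_exchange]
    simp [unitors_equal, unitors_inv_equal]
  have exch2 : ε_ X Y ≫ η_ Y X =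
      (ρ_ (Y ⊗ X)).inv ≫ (Y ⊗ X) ◁ η_ Y X ≫ ε_ X Y ▷ (Y ⊗ X) ≫ (λ_ (Y ⊗ X)).hom := by
    slice_rhs 2 3 => rw [whisker_exchange]
    simp [unitors_equal, unitors_inv_equal]
  have hmid : pairMul X Y ≫ pairComul X Y =
      (α_ X Y (X ⊗ Y)).hom ≫
        X ◁ ((α_ Y X Y).inv ≫ ((ε_ X Y ≫ η_ Y X) ▷ Y) ≫ (α_ Y X Y).hom) ≫
          (α_ X Y (X ⊗ Y)).inv := by
    simp only [pairMul, pairComul]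
    monoidal
  constructor
  · rw [hmid, exch1]
    simp only [pairMul, pairComul]
    monoidal
  · rw [hmid, exch2]
    simp only [pairMul, pairComul]
    monoidal
end
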